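/- For any finite simple graph H and n ≥ 1, π(K_n ∘ H) = π(H) + (n − 1)·|V(H)|. -/

import Mathlib

/-- A list is a repetition if it is of the form `w ++ w` for a nonempty `w`. -/
def IsRepetition {α : Type*} (l : List α) : Prop := ∃ w : List α, w ≠ [] ∧ l = w ++ w

/-- A list is non-repetitive if no block of consecutive elements is a repetition. -/
def NonRepetitive {α : Type*} (l : List α) : Prop :=
  ∀ t : List α, t <:+: l → ¬ IsRepetition t

/-- A vertex colouring is non-repetitive if the colour sequence of every path
is not a repetition. -/
def NonRepColoring {V β : Type*} (G : SimpleGraph V) (φ : V → β) : Prop :=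
  ∀ ⦃u v : V⦄ (p : G.Walk u v), p.IsPath → ¬ IsRepetition (p.support.map φ)

/-- The Thue chromatic number: minimum number of colours of a non-repetitive colouring. -/
noncomputable def thueNumber {V : Type*} [Fintype V] (G : SimpleGraph V) : ℕ :=
  sInf {k | ∃ φ : V → Fin k, NonRepColoring G φ}

/-- The Thue choice number: least `k` such that from any lists of size at least `k`
one can choose a non-repetitive colouring. -/
noncomputable def thueChoiceNumber {V : Type*} [Fintype V] (G : SimpleGraph V) : ℕ :=
  sInf {k | ∀ L : V → Finset ℕ, (∀ v, k ≤ (L v).card) →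
    ∃ φ : V → ℕ, (∀ v, φ v ∈ L v) ∧ NonRepColoring G φ}

/-- The independence number of a graph. -/
noncomputable def indepNum {V : Type*} [Fintype V] (G : SimpleGraph V) : ℕ :=
  sSup {n | ∃ s : Finset V, (∀ a ∈ s, ∀ b ∈ s, ¬ G.Adj a b) ∧ s.card = n}

/-- The lexicographic product of two simple graphs. -/
def lexProd {V W : Type*} (G : SimpleGraph V) (H : SimpleGraph W) : SimpleGraph (V × W) where
  Adj x y := G.Adj x.1 y.1 ∨ (x.1 = y.1 ∧ H.Adj x.2 y.2)
  symm := by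
    constructor
    rintro x y (h | ⟨h1, h2⟩)
    · exact Or.inl h.symm
    · exact Or.inr ⟨h1.symm, h2.symm⟩
  loopless := by
    constructor
    rintro x (h | ⟨h1, h2⟩)
    · exact G.loopless.irrefl _ h
    · exact H.loopless.irrefl _ h2

/-!
A non-repetitive colouring is proper, so in `K_n ∘ H` distinct fibres get disjoint sets of colours.
If the fibres over `i ≠ j` both repeated a colour, `ψ (i, a) = ψ (i, b)` and `ψ (j, c) = ψ (j, d)`,
then `(i, a) (j, c) (i, b) (j, d)` would be a path coloured `xyxy`. Hence all fibres but one are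
coloured injectively, and the remaining one still needs `π(H)` colours.

Conversely, colour one fibre by an optimal colouring of `H` and give every other vertex a colour
of its own. In a path coloured `ww`, each vertex has the colour of a different vertex of the other
half, so the whole path lies in the special fibre and projects to a path of `H` coloured `ww`.
-/

open SimpleGraph Function

theorem IsRepetition.map {α β : Type*} {l : List α} (f : α → β) (h : IsRepetition l) :
    IsRepetition (l.map f) := by
  obtain ⟨w, hw, rfl⟩ := h
  exact ⟨w.map f, by simpa using hw, List.map_append⟩

theorem IsRepetition.exists_split_of_map {α β : Type*} {l : List α} {f : α → β}
    (h : IsRepetition (l.map f)) :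
    ∃ s₁ s₂ : List α, s₁ ≠ [] ∧ l = s₁ ++ s₂ ∧ s₁.map f = s₂.map f := by
  obtain ⟨w, hw, hl⟩ := h
  obtain ⟨s₁, s₂, rfl, h₁, h₂⟩ := List.map_eq_append_iff.mp hl
  exact ⟨s₁, s₂, by rintro rfl; simp_all, rfl, h₁.trans h₂.symm⟩

theorem IsRepetition.of_map {α β : Type*} {l : List α} {f : α → β} (hf : Injective f)
    (h : IsRepetition (l.map f)) : IsRepetition l := by
  obtain ⟨s₁, s₂, hs₁, rfl, hs⟩ := h.exists_split_of_map
  exact ⟨s₁, hs₁, by rw [List.map_injective_iff.mpr hf hs]⟩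

theorem List.Nodup.not_isRepetition {α : Type*} {l : List α} (h : l.Nodup) :
    ¬ IsRepetition l := by
  rintro ⟨w, hw, rfl⟩
  exact (List.nodup_append.mp h).2.2 _ (List.head_mem hw) _ (List.head_mem hw) rfl

namespace NonRepColoring

variable {V β γ : Type*} {G : SimpleGraph V} {φ : V → β}

theorem of_injective (hφ : Injective φ) : NonRepColoring G φ := fun _ _ _ hp =>
  (hp.support_nodup.map hφ).not_isRepetition

theorem comp (h : NonRepColoring G φ) {f : β → γ} (hf : Injective f) :
    NonRepColoring G (f ∘ φ) := by
  intro u v p hp hrep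
  rw [← List.map_map] at hrep
  exact h p hp (hrep.of_map hf)

theorem of_comp {f : β → γ} (h : NonRepColoring G (f ∘ φ)) : NonRepColoring G φ := by
  intro u v p hp hrep
  exact h p hp (by simpa only [List.map_map] using hrep.map f)

theorem ne_of_adj (h : NonRepColoring G φ) {u v : V} (huv : G.Adj u v) : φ u ≠ φ v := by
  intro he
  refine h (Walk.cons huv Walk.nil) ?_ ⟨[φ u], by simp, by simp [he]⟩
  simp [huv.ne]

theorem ne_of_adj_of_adj_of_adj (h : NonRepColoring G φ) {a b c d : V}
    (hac : G.Adj a c) (hcb : G.Adj c b) (hbd : G.Adj b d)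
    (hab : a ≠ b) (hcd : c ≠ d) (had : a ≠ d) (hφab : φ a = φ b) : φ c ≠ φ d := by
  intro hφcd
  refine h (Walk.cons hac (Walk.cons hcb (Walk.cons hbd Walk.nil))) ?_
    ⟨[φ a, φ c], by simp, by simp [hφab, hφcd]⟩
  simp [hac.ne, hcb.ne, hbd.ne, hab, hcd, had]

end NonRepColoring

section thueNumber

variable {V β : Type*} [Fintype V] {G : SimpleGraph V}

theorem thueNumber_le_card [Fintype β] {φ : V → β} (h : NonRepColoring G φ) :
    thueNumber G ≤ Fintype.card β :=
  Nat.sInf_le ⟨Fintype.equivFin β ∘ φ, h.comp (Fintype.equivFin β).injective⟩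

theorem thueNumber_le_card_image [DecidableEq β] {φ : V → β} (h : NonRepColoring G φ) :
    thueNumber G ≤ (Finset.univ.image φ).card := by
  let φ' : V → {b // b ∈ Finset.univ.image φ} := fun v =>
    ⟨φ v, Finset.mem_image_of_mem φ (Finset.mem_univ v)⟩
  simpa using thueNumber_le_card (NonRepColoring.of_comp (f := Subtype.val) (φ := φ') h)

theorem exists_nonRepColoring_fin_thueNumber (G : SimpleGraph V) :
    ∃ φ : V → Fin (thueNumber G), NonRepColoring G φ :=
  Nat.sInf_mem (⟨_, Fintype.equivFin V, .of_injective (Fintype.equivFin V).injective⟩ :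
    {k | ∃ φ : V → Fin k, NonRepColoring G φ}.Nonempty)

end thueNumber

section lexProd

variable {V W β : Type*} {G : SimpleGraph V} {H : SimpleGraph W}

def lexProdFibre (G : SimpleGraph V) (H : SimpleGraph W) (i : V) : H ↪g lexProd G H where
  toFun w := (i, w)
  inj' _ _ h := (Prod.mk.inj h).2
  map_rel_iff' {a b} := by
    change G.Adj i i ∨ i = i ∧ H.Adj a b ↔ H.Adj a b
    simp

theorem NonRepColoring.lexProd_fibre {ψ : V × W → β} (h : NonRepColoring (lexProd G H) ψ)
    (i : V) : NonRepColoring H (fun w => ψ (i, w)) := by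
  intro u v q hq hrep
  refine h (q.map (lexProdFibre G H i).toHom) (hq.map (lexProdFibre G H i).injective) ?_
  rw [Walk.support_map, List.map_map]
  exact hrep

theorem exists_walk_support_eq_map_snd (i : V) : ∀ {a b : V × W} (p : (lexProd G H).Walk a b),
    (∀ v ∈ p.support, v.1 = i) → ∃ q : H.Walk a.2 b.2, q.support = p.support.map Prod.snd
  | _, _, .nil, _ => ⟨.nil, rfl⟩
  | a, _, .cons (v := x) hax p, hp => by
    have hH : H.Adj a.2 x.2 := by
      refine (hax.resolve_left fun hG => hG.ne ?_).2
      exact (hp a (by simp)).trans (hp x (by simp)).symm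
    obtain ⟨q, hq⟩ := exists_walk_support_eq_map_snd i p fun v hv => hp v (by simp [hv])
    exact ⟨.cons hH q, by simp [hq]⟩

end lexProd

section upperBound

variable {V W β : Type*} [DecidableEq V] {G : SimpleGraph V} {H : SimpleGraph W}

def lexProdColoring (φ : W → β) (i₀ : V) (x : V × W) : β ⊕ ({i // i ≠ i₀} × W) :=
  if h : x.1 = i₀ then .inl (φ x.2) else .inr (⟨x.1, h⟩, x.2)

theorem eq_of_lexProdColoring_eq {φ : W → β} {i₀ : V} {x y : V × W} (hx : x.1 ≠ i₀)
    (h : lexProdColoring φ i₀ x = lexProdColoring φ i₀ y) : x = y := by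
  rw [lexProdColoring, dif_neg hx, lexProdColoring] at h
  split_ifs at h
  simp only [Sum.inr.injEq, Prod.mk.injEq, Subtype.mk.injEq] at h
  exact Prod.ext h.1 h.2

theorem nonRepColoring_lexProdColoring {φ : W → β} (hφ : NonRepColoring H φ) (i₀ : V) :
    NonRepColoring (lexProd G H) (lexProdColoring φ i₀) := by
  intro a b p hp hrep
  obtain ⟨s₁, s₂, -, hs, hmap⟩ := hrep.exists_split_of_map
  have hdisj : ∀ x ∈ s₁, x ∉ s₂ := by
    have := hp.support_nodup
    rw [hs, List.nodup_append] at this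
    exact fun x hx hx' => this.2.2 x hx x hx' rfl
  have hmem : ∀ {t₁ t₂ : List (V × W)}, t₁.map (lexProdColoring φ i₀) =
      t₂.map (lexProdColoring φ i₀) → (∀ x ∈ t₁, x ∉ t₂) → ∀ x ∈ t₁, x.1 = i₀ := by
    intro t₁ t₂ ht ht_disj x hx
    obtain ⟨y, hy, hxy⟩ := List.mem_map.mp (ht ▸ List.mem_map_of_mem hx)
    by_contra hx₀
    exact ht_disj x hx (eq_of_lexProdColoring_eq hx₀ hxy.symm ▸ hy)
  have hfibre : ∀ v ∈ p.support, v.1 = i₀ := by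
    intro v hv
    rcases List.mem_append.mp (hs ▸ hv) with hv | hv
    · exact hmem hmap hdisj v hv
    · exact hmem hmap.symm (fun x hx₂ hx₁ => hdisj x hx₁ hx₂) v hv
  obtain ⟨q, hq⟩ := exists_walk_support_eq_map_snd i₀ p hfibre
  have hq_path : q.IsPath := by
    rw [Walk.isPath_def, hq]
    exact hp.support_nodup.map_on fun x hx y hy hxy =>
      Prod.ext ((hfibre x hx).trans (hfibre y hy).symm) hxy
  have hcolours : p.support.map (lexProdColoring φ i₀) = (q.support.map φ).map Sum.inl := by
    rw [hq, List.map_map, List.map_map]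
    exact List.map_congr_left fun v hv => by simp [lexProdColoring, hfibre v hv]
  exact hφ q hq_path ((hcolours ▸ hrep).of_map Sum.inl_injective)

theorem thueNumber_lexProd_le [Fintype V] [Fintype W] (G : SimpleGraph V) (H : SimpleGraph W)
    (i₀ : V) : thueNumber (lexProd G H) ≤ thueNumber H + (Fintype.card V - 1) * Fintype.card W := by
  obtain ⟨φ, hφ⟩ := exists_nonRepColoring_fin_thueNumber H
  simpa [Fintype.card_subtype_compl] using
    thueNumber_le_card (nonRepColoring_lexProdColoring (G := G) hφ i₀)

end upperBound

section lowerBound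

variable {V W β : Type*} {G : SimpleGraph V} {H : SimpleGraph W} {ψ : V × W → β}

theorem NonRepColoring.lexProd_ne_of_adj (h : NonRepColoring (lexProd G H) ψ) {i j : V}
    (hij : G.Adj i j) (a b : W) : ψ (i, a) ≠ ψ (j, b) :=
  h.ne_of_adj (Or.inl hij)

theorem NonRepColoring.lexProd_injective_fibre_of_adj (h : NonRepColoring (lexProd G H) ψ)
    {i j : V} (hij : G.Adj i j) (hi : ¬ Injective fun w => ψ (i, w)) :
    Injective fun w => ψ (j, w) := by
  intro c d hcd
  by_contra hne
  obtain ⟨a, b, hab, hne'⟩ := not_injective_iff.mp hi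
  exact h.ne_of_adj_of_adj_of_adj (Or.inl hij) (Or.inl hij.symm) (Or.inl hij)
    (by simp [hne']) (by simp [hne]) (by simp [hij.ne]) hab hcd

theorem NonRepColoring.exists_forall_ne_injective_fibre [Nonempty V]
    (h : NonRepColoring (lexProd (completeGraph V) H) ψ) :
    ∃ i₀, ∀ i ≠ i₀, Injective fun w => ψ (i, w) := by
  by_cases hall : ∀ i, Injective fun w => ψ (i, w)
  · exact ⟨Classical.arbitrary V, fun i _ => hall i⟩
  · obtain ⟨i₀, hi₀⟩ := not_forall.mp hall
    exact ⟨i₀, fun i hi => h.lexProd_injective_fibre_of_adj hi.symm hi₀⟩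

theorem NonRepColoring.lexProd_complete_card_le [Fintype V] [Nonempty V] [Fintype W]
    [Fintype β] (h : NonRepColoring (lexProd (completeGraph V) H) ψ) :
    thueNumber H + (Fintype.card V - 1) * Fintype.card W ≤ Fintype.card β := by
  classical
  let C : V → Finset β := fun i => Finset.univ.image fun w => ψ (i, w)
  obtain ⟨i₀, hinj⟩ := h.exists_forall_ne_injective_fibre
  have hdisj : Set.PairwiseDisjoint ↑(Finset.univ : Finset V) C := by
    intro i _ j _ hij
    simp only [C, Function.onFun, Finset.disjoint_left, Finset.mem_image, Finset.mem_univ,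
      true_and, not_exists, forall_exists_index, forall_apply_eq_imp_iff]
    exact fun a b => (h.lexProd_ne_of_adj hij a b).symm
  have hcard : ∀ i ∈ Finset.univ.erase i₀, (C i).card = Fintype.card W := fun i hi =>
    (Finset.card_image_of_injective _ (hinj i (Finset.ne_of_mem_erase hi))).trans Finset.card_univ
  calc thueNumber H + (Fintype.card V - 1) * Fintype.card W
      ≤ (C i₀).card + ∑ i ∈ Finset.univ.erase i₀, (C i).card := by
        rw [Finset.sum_congr rfl hcard, Finset.sum_const, Finset.card_erase_of_mem
          (Finset.mem_univ _), Finset.card_univ, smul_eq_mul]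
        exact Nat.add_le_add_right (thueNumber_le_card_image (h.lexProd_fibre i₀)) _
    _ = ∑ i, (C i).card := Finset.add_sum_erase _ (fun i => (C i).card) (Finset.mem_univ i₀)
    _ = (Finset.univ.biUnion C).card := (Finset.card_biUnion hdisj).symm
    _ ≤ Fintype.card β := Finset.card_le_univ _

end lowerBound

/-- `π(K_n ∘ H) = π(H) + (n-1)·|V(H)|`. -/
theorem thueNumber_lexProd_complete {W : Type*} [Fintype W] (H : SimpleGraph W)
    (n : ℕ) (hn : 1 ≤ n) :
    thueNumber (lexProd (SimpleGraph.completeGraph (Fin n)) H) =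
      thueNumber H + (n - 1) * Fintype.card W := by
  have : Nonempty (Fin n) := ⟨⟨0, hn⟩⟩
  obtain ⟨ψ, hψ⟩ := exists_nonRepColoring_fin_thueNumber (lexProd (completeGraph (Fin n)) H)
  refine le_antisymm ?_ ?_
  · simpa using thueNumber_lexProd_le (completeGraph (Fin n)) H ⟨0, hn⟩
  · simpa using hψ.lexProd_complete_card_le
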